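/- arXiv:math/0511576 — 3 statements merged into one kernel-verified Lean document; each statement's English description precedes it below -/
import Mathlib

section
/- In a topological vector space V, every connected and locally convex subset X is polygonally connected, i.e., any two points of X can be joined by a finite union of straight line segments lying entirely in X. -/
/-!
Near any point `a` of `X`, local convexity gives `segment a b ⊆ X` for all `b ∈ X` close to `a`,
so a polygonal path in `X` ending at `a` can be extended by one segment to end at `b`, and
conversely. Hence whether a point of `X` is polygonally reachable from `x` is locally constant
on `X`, and so constant on the preconnected set `X`.
-/

open Filter Topology

section

variable {V : Type*} [AddCommGroup V] [Module ℝ V]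

def PolygonallyJoinedIn (X : Set V) (x y : V) : Prop :=
  ∃ (n : ℕ) (p : Fin (n + 1) → V), p 0 = x ∧ p (Fin.last n) = y ∧
    ∀ i : Fin n, segment ℝ (p i.castSucc) (p i.succ) ⊆ X

namespace PolygonallyJoinedIn

variable {X : Set V} {x y z : V}

lemma refl (X : Set V) (x : V) : PolygonallyJoinedIn X x x :=
  ⟨0, fun _ => x, rfl, rfl, fun i => i.elim0⟩

lemma snoc (h : PolygonallyJoinedIn X x y) (hyz : segment ℝ y z ⊆ X) :
    PolygonallyJoinedIn X x z := by
  obtain ⟨n, p, hp0, hpn, hp⟩ := h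
  refine ⟨n + 1, Fin.snoc p z, ?_, Fin.snoc_last _ _, fun i => ?_⟩
  · exact (Fin.snoc_castSucc (i := 0) ..).trans hp0
  · induction i using Fin.lastCases with
    | last => rwa [Fin.succ_last, Fin.snoc_castSucc, Fin.snoc_last, hpn]
    | cast j => rw [Fin.succ_castSucc, Fin.snoc_castSucc, Fin.snoc_castSucc]; exact hp j

end PolygonallyJoinedIn

lemma eventually_segment_subset_of_convex_inter [TopologicalSpace V] {X N : Set V} {a : V}
    (hN : N ∈ 𝓝 a) (hconv : Convex ℝ (N ∩ X)) (ha : a ∈ X) :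
    ∀ᶠ b in 𝓝[X] a, segment ℝ a b ⊆ X := by
  filter_upwards [inter_mem_nhdsWithin X hN] with b hb
  exact (hconv.segment_subset ⟨mem_of_mem_nhds hN, ha⟩ ⟨hb.2, hb.1⟩).trans Set.inter_subset_right

end

theorem stmt_0_general {V : Type*} [TopologicalSpace V] [AddCommGroup V] [Module ℝ V]
    {X : Set V} (hconn : IsPreconnected X)
    (hlc : ∀ y ∈ X, ∃ N ∈ nhds y, Convex ℝ (N ∩ X))
    {x y : V} (hx : x ∈ X) (hy : y ∈ X) :
    ∃ (n : ℕ) (p : Fin (n + 1) → V), p 0 = x ∧ p (Fin.last n) = y ∧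
      ∀ i : Fin n, segment ℝ (p i.castSucc) (p i.succ) ⊆ X := by
  have reachable_iff : PolygonallyJoinedIn X x x ↔ PolygonallyJoinedIn X x y := by
    refine hconn.induction₂' (fun a b => PolygonallyJoinedIn X x a ↔ PolygonallyJoinedIn X x b)
      (fun a ha => ?_) (fun _ _ _ _ _ _ => Iff.trans) hx hy
    obtain ⟨N, hN, hconv⟩ := hlc a ha
    filter_upwards [eventually_segment_subset_of_convex_inter hN hconv ha] with b hab
    have hba : segment ℝ b a ⊆ X := segment_symm ℝ a b ▸ hab
    exact ⟨⟨(·.snoc hab), (·.snoc hba)⟩, ⟨(·.snoc hba), (·.snoc hab)⟩⟩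
  exact reachable_iff.1 (.refl X x)

/-- In a topological vector space `V`, every connected and locally convex subset `X`
is polygonally connected: any two points of `X` are joined by a finite union of
straight line segments lying entirely in `X`. -/
theorem stmt_0 {V : Type*} [TopologicalSpace V] [AddCommGroup V] [Module ℝ V]
    [IsTopologicalAddGroup V] [ContinuousSMul ℝ V]
    {X : Set V} (hconn : IsPreconnected X)
    (hlc : ∀ y ∈ X, ∃ N ∈ nhds y, Convex ℝ (N ∩ X))
    {x y : V} (hx : x ∈ X) (hy : y ∈ X) :
    ∃ (n : ℕ) (p : Fin (n + 1) → V), p 0 = x ∧ p (Fin.last n) = y ∧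
      ∀ i : Fin n, segment ℝ (p i.castSucc) (p i.succ) ⊆ X :=
  stmt_0_general hconn hlc hx hy
end

section
/- (Klee) Every closed, connected, and locally convex subset of a topological vector space is convex. -/
/-!
By connectedness (`IsPreconnected.induction₂'`) it suffices that "`[p, q] ⊆ X`" is a transitive
relation on `X`, since local convexity makes it hold for nearby points. Transitivity is Klee's
triangle lemma: if `[a, b]` and `[b, c]` lie in `X`, push the far endpoint of `[a, b]` along
`[b, c]`; the set of reachable parameters is closed because `X` is, and it is open on the right
because a segment `[a, d] ⊆ X` can always be tilted a little towards `c`. The tilting is done in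
the plane spanned by the triangle: by compactness there is a uniform radius on which `X` is convex
around `[a, d]`, and repeated midpoints fill a thin rectangle along `[a, d]` whose height halves
at each step.
-/

open Set Filter Topology Metric AffineMap

theorem mk_mem_ball_mk_zero_iff {x y l r : ℝ} :
    (x, y) ∈ ball (l, (0 : ℝ)) r ↔ |x - l| < r ∧ |y| < r := by
  simp [← ball_prod_same, Real.dist_eq]

theorem mem_of_le_pow_of_convex_ball_inter {S : Set (ℝ × ℝ)} {r σ h₀ : ℝ}
    (hσ : 0 ≤ σ) (hσr : 2 * σ < r) (h₀1 : h₀ ≤ 1) (h₀r : h₀ < r)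
    (hconv : ∀ l ∈ Icc (0 : ℝ) 1, Convex ℝ (ball (l, 0) r ∩ S))
    (hbot : ∀ l ∈ Icc (0 : ℝ) 1, (l, 0) ∈ S) (hright : ∀ h ∈ Icc (0 : ℝ) 1, (1, h) ∈ S)
    (k : ℕ) {l h : ℝ} (hσl : σ ≤ l) (hkl : 1 - k * σ ≤ l) (hl1 : l ≤ 1) (h0 : 0 ≤ h)
    (hh : h ≤ h₀ / 2 ^ k) : (l, h) ∈ S := by
  induction k generalizing l h with
  | zero =>
    obtain rfl : l = 1 := by simp at hkl; linarith
    exact hright h ⟨h0, by simp at hh; linarith⟩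
  | succ k ih =>
    have hh' : 2 * h ≤ h₀ / 2 ^ k := by rw [pow_succ] at hh; field_simp at hh ⊢; linarith
    by_cases hlk : 1 - k * σ ≤ l
    · exact ih hσl hlk hl1 h0 (by linarith)
    push_cast at hkl
    set s := 1 - k * σ
    have hs1 : s ≤ 1 := by simp only [s]; nlinarith [k.cast_nonneg (α := ℝ)]
    have hP : (s, 2 * h) ∈ S := ih (by linarith) le_rfl hs1 (by linarith) hh'
    have hQ : (2 * l - s, 0) ∈ S := hbot _ ⟨by linarith, by linarith⟩
    have h₀0 : 0 ≤ h₀ := by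
      by_contra! hneg
      linarith [div_neg_of_neg_of_pos hneg (by positivity : (0 : ℝ) < 2 ^ (k + 1))]
    have h₀r' : h₀ / 2 ^ k < r := (div_le_self h₀0 (one_le_pow₀ one_le_two)).trans_lt h₀r
    -- `(l, h)` is the midpoint of `(s, 2 h)` and `(2 l - s, 0)`, both within `2 σ` of `(s, 0)`
    have hmid := hconv s ⟨by linarith, hs1⟩
      ⟨mk_mem_ball_mk_zero_iff.2 ⟨by simpa using by linarith,
        abs_lt.2 ⟨by linarith, by linarith⟩⟩, hP⟩
      ⟨mk_mem_ball_mk_zero_iff.2 ⟨abs_lt.2 ⟨by linarith, by linarith⟩,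
        by simpa using by linarith⟩, hQ⟩
      (by norm_num : (0 : ℝ) ≤ 1 / 2) (by norm_num : (0 : ℝ) ≤ 1 / 2) (by norm_num)
    convert hmid.2 using 1
    ext <;> simp; ring

theorem exists_slope_mem_of_convex_ball_inter {S : Set (ℝ × ℝ)} {r : ℝ} (hr : 0 < r)
    (hconv : ∀ l ∈ Icc (0 : ℝ) 1, Convex ℝ (ball (l, 0) r ∩ S))
    (hbot : ∀ l ∈ Icc (0 : ℝ) 1, (l, 0) ∈ S) (hright : ∀ h ∈ Icc (0 : ℝ) 1, (1, h) ∈ S) :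
    ∃ β ∈ Ioc (0 : ℝ) 1, ∀ l ∈ Icc (0 : ℝ) 1, (l, β * l) ∈ S := by
  set h₀ := min 1 (r / 2)
  have h₀0 : 0 < h₀ := lt_min one_pos (half_pos hr)
  have h₀1 : h₀ ≤ 1 := min_le_left _ _
  have h₀r : h₀ < r := (min_le_right _ _).trans_lt (half_lt_self hr)
  set σ := h₀ / 2 with hσ
  have hσ0 : 0 < σ := half_pos h₀0
  set k := ⌈1 / σ⌉₊
  have hkσ : 1 ≤ k * σ := by
    rw [← div_le_iff₀ (by positivity)]; exact Nat.le_ceil _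
  set β := h₀ / 2 ^ k
  have hβ : β ∈ Ioc (0 : ℝ) 1 :=
    ⟨by positivity, (div_le_self h₀0.le (one_le_pow₀ one_le_two)).trans h₀1⟩
  have hrect : ∀ {l h : ℝ}, σ ≤ l → l ≤ 1 → 0 ≤ h → h ≤ β → (l, h) ∈ S := fun hσl hl1 h0 hh =>
    mem_of_le_pow_of_convex_ball_inter (by positivity) (by linarith) h₀1 h₀r hconv hbot hright k
      hσl (by linarith) hl1 h0 hh
  refine ⟨β, hβ, fun l hl => ?_⟩
  rcases le_or_gt σ l with hσl | hlσ
  · exact hrect hσl hl.2 (mul_nonneg hβ.1.le hl.1) (mul_le_of_le_one_right hβ.1.le hl.2)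
  -- the rectangle stops at `l = σ`; below it, use convexity around the origin
  have hcorner : (σ, β * σ) ∈ S := hrect le_rfl (by linarith) (by positivity)
    (mul_le_of_le_one_right hβ.1.le (by linarith))
  have hseg := hconv 0 ⟨le_rfl, zero_le_one⟩
    ⟨mk_mem_ball_mk_zero_iff.2 ⟨by simpa, by simpa⟩, hbot 0 ⟨le_rfl, zero_le_one⟩⟩
    ⟨mk_mem_ball_mk_zero_iff.2 ⟨by rw [sub_zero, abs_of_pos (by positivity)]; linarith,
      by rw [abs_of_pos (by nlinarith [hβ.1])]; nlinarith [hβ.2]⟩, hcorner⟩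
    (by rw [sub_nonneg, div_le_one (by positivity)]; exact hlσ.le : 0 ≤ 1 - l / σ)
    (div_nonneg hl.1 (by positivity)) (sub_add_cancel 1 (l / σ))
  convert hseg.2 using 1
  ext <;> simp [field]

theorem IsCompact.exists_convex_ball_inter {E : Type*} [SeminormedAddCommGroup E]
    [NormedSpace ℝ E] {K S : Set E} (hK : IsCompact K)
    (hS : ∀ p ∈ K, ∃ N ∈ 𝓝 p, Convex ℝ (N ∩ S)) :
    ∃ r > 0, ∀ p ∈ K, Convex ℝ (ball p r ∩ S) := by
  choose N hN hNS using hS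
  obtain ⟨r, hr, hball⟩ :=
    lebesgue_number_lemma_of_metric (c := fun q : K => interior (N q q.2)) hK
      (fun _ => isOpen_interior)
    (fun p hp => mem_iUnion.2 ⟨⟨p, hp⟩, mem_interior_iff_mem_nhds.2 (hN p hp)⟩)
  refine ⟨r, hr, fun p hp => ?_⟩
  obtain ⟨q, hq⟩ := hball p hp
  rw [← inter_eq_left.2 (hq.trans interior_subset), inter_assoc]
  exact (convex_ball p r).inter (hNS q q.2)

def IsLocallyConvex {V : Type*} [TopologicalSpace V] [AddCommGroup V] [Module ℝ V]
    (X : Set V) : Prop :=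
  ∀ x ∈ X, ∃ N ∈ 𝓝 x, Convex ℝ (N ∩ X)

section TopologicalModule

variable {V : Type*} [TopologicalSpace V] [AddCommGroup V] [Module ℝ V] [ContinuousAdd V]
  [ContinuousSMul ℝ V] {X : Set V}

theorem IsLocallyConvex.exists_segment_lineMap_subset (hX : IsLocallyConvex X) {a d c : V}
    (had : segment ℝ a d ⊆ X) (hdc : segment ℝ d c ⊆ X) :
    ∃ β ∈ Ioc (0 : ℝ) 1, segment ℝ a (lineMap d c β) ⊆ X := by
  let L : ℝ × ℝ →ₗ[ℝ] V :=
    (LinearMap.fst ℝ ℝ ℝ).smulRight (d - a) + (LinearMap.snd ℝ ℝ ℝ).smulRight (c - d)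
  let φ : ℝ × ℝ → V := fun p => a + L p
  have hφ : ∀ p, φ p = a + p.1 • (d - a) + p.2 • (c - d) := fun p => by
    simp [φ, L, add_assoc]
  have hφc : Continuous φ := by rw [funext hφ]; fun_prop
  have hlc : ∀ p ∈ Icc (0 : ℝ) 1 ×ˢ {0}, ∃ N ∈ 𝓝 p, Convex ℝ (N ∩ φ ⁻¹' X) := by
    rintro ⟨l, _⟩ ⟨hl, rfl⟩
    obtain ⟨N, hN, hNX⟩ := hX (φ (l, 0)) (had ⟨1 - l, l, by linarith [hl.2], hl.1, by ring,
      by rw [hφ]; module⟩)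
    exact ⟨φ ⁻¹' N, hφc.continuousAt.preimage_mem_nhds hN,
      (hNX.translate_preimage_right a).linear_preimage L⟩
  obtain ⟨r, hr, hconv⟩ := (isCompact_Icc.prod isCompact_singleton).exists_convex_ball_inter hlc
  obtain ⟨β, hβ, hseg⟩ := exists_slope_mem_of_convex_ball_inter hr
    (fun l hl => hconv (l, 0) ⟨hl, rfl⟩)
    (fun l hl => had ⟨1 - l, l, by linarith [hl.2], hl.1, by ring, by rw [hφ]; module⟩)
    (fun h hh => hdc ⟨1 - h, h, by linarith [hh.2], hh.1, by ring, by rw [hφ]; module⟩)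
  refine ⟨β, hβ, ?_⟩
  rw [segment_eq_image_lineMap]
  rintro _ ⟨l, hl, rfl⟩
  have hmem : φ (l, β * l) ∈ X := hseg l hl
  convert hmem using 1
  rw [hφ, lineMap_apply_module, lineMap_apply_module]
  module

theorem IsClosed.segment_subset_trans (hXc : IsClosed X) (hX : IsLocallyConvex X) {a b c : V}
    (hab : segment ℝ a b ⊆ X) (hbc : segment ℝ b c ⊆ X) : segment ℝ a c ⊆ X := by
  let s := {t : ℝ | segment ℝ a (lineMap b c t) ⊆ X}
  have hs : IsClosed s := by
    have : s = ⋂ θ ∈ Icc (0 : ℝ) 1,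
        (fun t => (1 - θ) • a + θ • ((1 - t) • b + t • c)) ⁻¹' X := by
      ext t
      simp only [s, segment_eq_image, image_subset_iff, lineMap_apply_module, mem_ofPred_eq,
        mem_iInter₂]
      rfl
    rw [this]
    exact isClosed_biInter fun θ _ => hXc.preimage (by fun_prop)
  suffices (1 : ℝ) ∈ s by simpa [s] using this
  refine (hs.inter isClosed_Icc).mem_of_ge_of_forall_exists_gt (by simpa [s]) zero_le_one ?_
  rintro t ⟨ht, ht0, ht1⟩
  have hdc : segment ℝ (lineMap b c t) c ⊆ X :=
    ((convex_segment b c).segment_subset (lineMap_mem_segment ℝ b c ⟨ht0, ht1.le⟩)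
      (right_mem_segment ..)).trans hbc
  obtain ⟨β, ⟨hβ0, hβ1⟩, hβ⟩ := hX.exists_segment_lineMap_subset ht hdc
  refine ⟨t + β * (1 - t), ?_, by nlinarith, by nlinarith⟩
  show segment ℝ a (lineMap b c (t + β * (1 - t))) ⊆ X
  convert hβ using 2
  simp only [lineMap_apply_module]
  module

end TopologicalModule

/-- (Klee) Every closed, connected, and locally convex subset of a topological
vector space is convex. -/
theorem stmt_1 {V : Type*} [TopologicalSpace V] [AddCommGroup V] [Module ℝ V]
    [IsTopologicalAddGroup V] [ContinuousSMul ℝ V]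
    {X : Set V} (hclosed : IsClosed X) (hconn : IsPreconnected X)
    (hlc : ∀ x ∈ X, ∃ N ∈ nhds x, Convex ℝ (N ∩ X)) :
    Convex ℝ X := by
  refine convex_iff_segment_subset.2 fun x hx y hy =>
    hconn.induction₂' (fun p q => segment ℝ p q ⊆ X) (fun p hp => ?_)
      (fun _ _ _ _ _ _ => hclosed.segment_subset_trans hlc) hx hy
  obtain ⟨N, hN, hNX⟩ := hlc p hp
  filter_upwards [nhdsWithin_le_nhds hN, self_mem_nhdsWithin] with q hqN hqX
  have hpq : segment ℝ p q ⊆ X :=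
    (hNX.segment_subset ⟨mem_of_mem_nhds hN, hp⟩ ⟨hqN, hqX⟩).trans inter_subset_right
  exact ⟨hpq, segment_symm ℝ q p ▸ hpq⟩
end

section
/- Let X be a closed, connected, locally convex subset of a topological vector space. If [x,y] ⊆ X and [y,z] ⊆ X, then [x,z] ⊆ X (one can 'cut corners' in X). -/
/-!
Pulling `X` back along the affine map `(h, ξ) ↦ y + h • (z - y) + ξ • (x - y)` gives a closed,
locally convex `Y ⊆ ℝ × ℝ` containing `[0, 1] × {0}` and `{0} × [0, 1]`, and we must show
`(h, 1 - h) ∈ Y`. By a Lebesgue number argument there is `δ > 0` such that two points of `Y`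
at distance `< δ`, one of them in the unit square, span a segment inside `Y`. The segment
`{(h, (1 - h) * s)}` is then pushed from `s = 0` to `s = 1` in steps of size `< δ`.

Each step is a thin triangle, mapped affinely onto the standard one. There, `stalkHeight Z h`
is the height up to which the vertical stalk over `(h, 0)` stays in `Z`. Thinness makes any two
stalk points with close abscissae `δ`-close, so `stalkHeight Z` is concave on short windows; on
a fine grid this gives a minimum principle, which forces `stalkHeight Z h ≥ 1 - h` from the
values at the two ends.
-/

open Set Topology

theorem nonneg_of_discrete_concave {g : ℕ → ℝ} {N : ℕ} (h0 : 0 ≤ g 0) (hN : 0 ≤ g N)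
    (hconc : ∀ m, m + 2 ≤ N → g m + g (m + 2) ≤ 2 * g (m + 1)) {i : ℕ} (hi : i ≤ N) :
    0 ≤ g i := by
  classical
  have hmin : ∃ i, i ≤ N ∧ ∀ j ≤ N, g i ≤ g j := by
    obtain ⟨i, hi, hmin⟩ := (Finset.range (N + 1)).exists_min_image g ⟨0, by simp⟩
    exact ⟨i, by simpa [Nat.lt_succ_iff] using hi,
      fun j hj => hmin j (by simpa [Nat.lt_succ_iff] using hj)⟩
  by_contra! hneg
  -- the leftmost minimum of `g` is an interior point where midpoint concavity fails
  obtain ⟨hi₀N, hi₀min⟩ := Nat.find_spec hmin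
  have hlt : g (Nat.find hmin) < 0 := (hi₀min i hi).trans_lt hneg
  have hne₀ : Nat.find hmin ≠ 0 := fun h => by rw [h] at hlt; linarith
  have hneN : Nat.find hmin ≠ N := fun h => by rw [h] at hlt; linarith
  obtain ⟨m, hm⟩ : ∃ m, Nat.find hmin = m + 1 :=
    Nat.exists_eq_add_one.mpr (Nat.pos_of_ne_zero hne₀)
  have hmN : m + 2 ≤ N := by omega
  obtain ⟨j, hjN, hj⟩ : ∃ j ≤ N, g j < g m := by
    have := Nat.find_min hmin (show m < Nat.find hmin by omega)
    push Not at this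
    exact this (by omega)
  have := hconc m hmN
  rw [hm] at hi₀min
  linarith [hi₀min j hjN, hi₀min (m + 2) hmN]

theorem exists_nat_mem_Icc_add_mul {a s x : ℝ} {N : ℕ} (hs : 0 < s) (hax : a ≤ x)
    (hxN : x < a + N * s) : ∃ i < N, x ∈ Icc (a + i * s) (a + (i + 1) * s) := by
  have hq : 0 ≤ (x - a) / s := div_nonneg (sub_nonneg.mpr hax) hs.le
  refine ⟨⌊(x - a) / s⌋₊, (Nat.floor_lt hq).mpr ((div_lt_iff₀ hs).mpr (by linarith)), ?_, ?_⟩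
  · have := Nat.floor_le hq
    rw [le_div_iff₀ hs] at this
    linarith
  · have := Nat.lt_floor_add_one ((x - a) / s)
    rw [div_lt_iff₀ hs] at this
    linarith

theorem nonneg_of_locallyConcaveOn_Icc {f : ℝ → ℝ} {a b w : ℝ} (hw : 0 < w)
    (hf : ∀ c, ConcaveOn ℝ (Icc a b ∩ Icc c (c + w)) f) (ha : 0 ≤ f a) (hb : 0 ≤ f b)
    {x : ℝ} (hx : x ∈ Icc a b) : 0 ≤ f x := by
  have hab : 0 ≤ b - a := by linarith [hx.1, hx.2]
  obtain ⟨N, hN⟩ := exists_nat_gt (2 * (b - a) / w)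
  have hNpos : (0 : ℝ) < N := lt_of_le_of_lt (by positivity) hN
  set s := (b - a) / N with hs_def
  have hs : 0 ≤ s := by positivity
  have hNs : N * s = b - a := by rw [hs_def]; field_simp
  have h2s : 2 * s ≤ w := by
    rw [div_lt_iff₀ hw] at hN
    nlinarith
  have hgrid : ∀ i : ℕ, i ≤ N → a + i * s ∈ Icc a b := fun i hi =>
    ⟨by nlinarith, by nlinarith [(Nat.cast_le (α := ℝ)).mpr hi]⟩
  have hwindow : ∀ (i j : ℕ), i ≤ j → j ≤ i + 2 → j ≤ N →
      a + j * s ∈ Icc a b ∩ Icc (a + i * s) (a + i * s + w) := by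
    intro i j hij hji hjN
    have : (j : ℝ) ≤ i + 2 := by exact_mod_cast hji
    exact ⟨hgrid j hjN, by nlinarith [(Nat.cast_le (α := ℝ)).mpr hij], by nlinarith⟩
  have hg : ∀ i ≤ N, 0 ≤ f (a + i * s) := by
    intro i hi
    refine nonneg_of_discrete_concave (g := fun i : ℕ => f (a + i * s)) (by simpa using ha)
      (by simpa [hNs] using hb) (fun m hm => ?_) hi
    have hmid := (hf (a + m * s)).2 (hwindow m m le_rfl (by omega) (by omega))
      (hwindow m (m + 2) (by omega) le_rfl hm) (by norm_num : (0 : ℝ) ≤ 1 / 2)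
      (by norm_num : (0 : ℝ) ≤ 1 / 2) (by norm_num)
    have hmidpt : (1 / 2 : ℝ) • (a + m * s) + (1 / 2 : ℝ) • (a + ((m + 2 : ℕ) : ℝ) * s)
        = a + ((m + 1 : ℕ) : ℝ) * s := by
      push_cast; simp only [smul_eq_mul]; ring
    rw [hmidpt, smul_eq_mul, smul_eq_mul] at hmid
    linarith
  rcases hx.2.eq_or_lt with rfl | hxb
  · exact hb
  have hspos : 0 < s := by rw [hs_def]; exact div_pos (by linarith [hx.1]) hNpos
  obtain ⟨i, hiN, hxi⟩ := exists_nat_mem_Icc_add_mul hspos hx.1 (by linarith)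
  have hmin := (hf (a + i * s)).ge_on_segment (z := x) (hwindow i i le_rfl (by omega) hiN.le)
    (hwindow i (i + 1) (by omega) (by omega) hiN)
    (by push_cast; rw [segment_eq_Icc (hxi.1.trans hxi.2)]; exact hxi)
  exact (le_min (hg i hiN.le) (hg (i + 1) hiN)).trans hmin

abbrev unitSquare : Set (ℝ × ℝ) := Icc 0 1 ×ˢ Icc 0 1

section Stalk

variable {Z : Set (ℝ × ℝ)} {h ξ w : ℝ}

def stalk (Z : Set (ℝ × ℝ)) (h : ℝ) : Set ℝ :=
  {ξ ∈ Icc 0 (1 - h) | Icc 0 ξ ⊆ Prod.mk h ⁻¹' Z}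

noncomputable def stalkHeight (Z : Set (ℝ × ℝ)) (h : ℝ) : ℝ :=
  sSup (stalk Z h)

theorem zero_mem_stalk (h₀ : (h, 0) ∈ Z) (h₁ : h ≤ 1) : 0 ∈ stalk Z h :=
  ⟨⟨le_rfl, by linarith⟩, by simpa using h₀⟩

theorem le_stalkHeight (hξ₀ : 0 ≤ ξ) (hξ₁ : ξ ≤ 1 - h) (hZ : Icc 0 ξ ⊆ Prod.mk h ⁻¹' Z) :
    ξ ≤ stalkHeight Z h :=
  le_csSup ⟨1 - h, fun _ hη => hη.1.2⟩ ⟨⟨hξ₀, hξ₁⟩, hZ⟩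

theorem stalkHeight_nonneg (h₀ : (h, 0) ∈ Z) (h₁ : h ≤ 1) : 0 ≤ stalkHeight Z h :=
  le_stalkHeight le_rfl (by linarith) (zero_mem_stalk h₀ h₁).2

theorem stalkHeight_le (h₀ : (h, 0) ∈ Z) (h₁ : h ≤ 1) : stalkHeight Z h ≤ 1 - h :=
  csSup_le ⟨0, zero_mem_stalk h₀ h₁⟩ fun _ hη => hη.1.2

theorem Icc_stalkHeight_subset (hZ : IsClosed Z) (h₀ : (h, 0) ∈ Z) (h₁ : h ≤ 1) :
    Icc 0 (stalkHeight Z h) ⊆ Prod.mk h ⁻¹' Z := by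
  have hIco : Ico 0 (stalkHeight Z h) ⊆ Prod.mk h ⁻¹' Z := fun ξ hξ => by
    obtain ⟨η, ⟨-, hη⟩, hξη⟩ := exists_lt_of_lt_csSup ⟨0, zero_mem_stalk h₀ h₁⟩ hξ.2
    exact hη ⟨hξ.1, hξη.le⟩
  rcases (stalkHeight_nonneg h₀ h₁).eq_or_lt with hzero | hpos
  · rw [← hzero, Icc_self, singleton_subset_iff]
    exact h₀
  · rw [← closure_Ico hpos.ne]
    exact (hZ.preimage (by fun_prop)).closure_subset_iff.mpr hIco

theorem concaveOn_stalkHeight (hZ : IsClosed Z) (hbase : ∀ h ∈ Icc (0 : ℝ) 1, (h, 0) ∈ Z)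
    (hclose : ∀ p ∈ unitSquare ∩ Z, ∀ q ∈ unitSquare ∩ Z,
      |p.1 - q.1| ≤ w → segment ℝ p q ⊆ Z) (c : ℝ) :
    ConcaveOn ℝ (Icc 0 1 ∩ Icc c (c + w)) (stalkHeight Z) := by
  refine ⟨(convex_Icc 0 1).inter (convex_Icc _ _), ?_⟩
  rintro h₁ ⟨hh₁, hc₁⟩ h₂ ⟨hh₂, hc₂⟩ s t hs ht hst
  simp only [smul_eq_mul]
  have hb₁ := stalkHeight_le (hbase h₁ hh₁) hh₁.2
  have hb₂ := stalkHeight_le (hbase h₂ hh₂) hh₂.2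
  have hn₁ := stalkHeight_nonneg (hbase h₁ hh₁) hh₁.2
  have hn₂ := stalkHeight_nonneg (hbase h₂ hh₂) hh₂.2
  set S := s * stalkHeight Z h₁ + t * stalkHeight Z h₂
  have hS₀ : 0 ≤ S := add_nonneg (mul_nonneg hs hn₁) (mul_nonneg ht hn₂)
  refine le_stalkHeight hS₀ (by nlinarith) fun ξ hξ => ?_
  rcases hS₀.eq_or_lt with hS | hS
  · obtain rfl : ξ = 0 := le_antisymm (hS ▸ hξ.2) hξ.1
    exact hbase _
      ⟨add_nonneg (mul_nonneg hs hh₁.1) (mul_nonneg ht hh₂.1), by nlinarith [hh₁.2, hh₂.2]⟩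
  -- scale both stalks by `ξ / S` and join the resulting points by a segment
  set r := ξ / S
  have hr₀ : 0 ≤ r := div_nonneg hξ.1 hS.le
  have hr₁ : r ≤ 1 := div_le_one_of_le₀ hξ.2 hS.le
  have hmem : ∀ h ∈ Icc (0 : ℝ) 1, (h, r * stalkHeight Z h) ∈ unitSquare ∩ Z := by
    intro h hh
    have hb := stalkHeight_le (hbase h hh) hh.2
    have hn := stalkHeight_nonneg (hbase h hh) hh.2
    refine ⟨⟨hh, mul_nonneg hr₀ hn, ?_⟩, ?_⟩
    · linarith [mul_le_of_le_one_left hn hr₁, hh.1]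
    · exact Icc_stalkHeight_subset hZ (hbase h hh) hh.2
        ⟨mul_nonneg hr₀ hn, mul_le_of_le_one_left hn hr₁⟩
  have hclose₁₂ : |h₁ - h₂| ≤ w :=
    abs_sub_le_iff.mpr ⟨by linarith [hc₁.2, hc₂.1], by linarith [hc₁.1, hc₂.2]⟩
  refine hclose _ (hmem h₁ hh₁) _ (hmem h₂ hh₂) hclose₁₂ ⟨s, t, hs, ht, hst, ?_⟩
  ext
  · simp
  · simp only [Prod.smul_mk, smul_eq_mul, Prod.snd_add]
    rw [← div_mul_cancel₀ ξ hS.ne']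
    ring

theorem mk_one_sub_mem_of_segment_subset (hZ : IsClosed Z) (hw : 0 < w)
    (hbase : ∀ h ∈ Icc (0 : ℝ) 1, (h, 0) ∈ Z) (hside : ∀ ξ ∈ Icc (0 : ℝ) 1, (0, ξ) ∈ Z)
    (hclose : ∀ p ∈ unitSquare ∩ Z, ∀ q ∈ unitSquare ∩ Z,
      |p.1 - q.1| ≤ w → segment ℝ p q ⊆ Z) (hh : h ∈ Icc (0 : ℝ) 1) :
    (h, 1 - h) ∈ Z := by
  have h₀ : 1 ≤ stalkHeight Z 0 := le_stalkHeight zero_le_one (by norm_num) hside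
  have h₁ : 0 ≤ stalkHeight Z 1 := stalkHeight_nonneg (hbase 1 ⟨zero_le_one, le_rfl⟩) le_rfl
  have hge : 0 ≤ stalkHeight Z h + h - 1 :=
    nonneg_of_locallyConcaveOn_Icc hw (f := fun h => stalkHeight Z h + h - 1)
      (fun c => ((concaveOn_stalkHeight hZ hbase hclose c).add (concaveOn_id
        ((convex_Icc 0 1).inter (convex_Icc _ _)))).add_const (-1))
      (by simp; linarith) (by simp; linarith) hh
  exact Icc_stalkHeight_subset hZ (hbase h hh) hh.2 ⟨by linarith [hh.2], by linarith⟩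

end Stalk

def IsLocallyConvexSet {E : Type*} [TopologicalSpace E] [AddCommGroup E] [Module ℝ E]
    (X : Set E) : Prop :=
  ∀ v ∈ X, ∃ N ∈ 𝓝 v, Convex ℝ (N ∩ X)

theorem IsLocallyConvexSet.preimage {E F : Type*} [TopologicalSpace E] [AddCommGroup E]
    [Module ℝ E] [TopologicalSpace F] [AddCommGroup F] [Module ℝ F] {X : Set F}
    (hX : IsLocallyConvexSet X) (f : E →ᵃ[ℝ] F) (hf : Continuous f) :
    IsLocallyConvexSet (f ⁻¹' X) := fun v hv => by
  obtain ⟨N, hN, hconv⟩ := hX (f v) hv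
  exact ⟨f ⁻¹' N, hf.continuousAt.preimage_mem_nhds hN, hconv.affine_preimage f⟩

theorem IsLocallyConvexSet.exists_segment_subset {E : Type*} [PseudoMetricSpace E]
    [AddCommGroup E] [Module ℝ E] {X s : Set E} (hX : IsLocallyConvexSet X) (hs : IsCompact s)
    (hsX : s ⊆ X) : ∃ δ > 0, ∀ a ∈ s, ∀ b ∈ X, dist a b < δ → segment ℝ a b ⊆ X := by
  choose! N hN hconv using hX
  obtain ⟨δ, hδ, hball⟩ := lebesgue_number_lemma_of_metric hs
    (c := fun v : s => interior (N v)) (fun _ => isOpen_interior)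
    (fun v hv => mem_iUnion.mpr ⟨⟨v, hv⟩, mem_interior_iff_mem_nhds.mpr (hN v (hsX hv))⟩)
  refine ⟨δ, hδ, fun a ha b hb hab => ?_⟩
  obtain ⟨v, hv⟩ := hball a ha
  have hsub : Metric.ball a δ ⊆ N v := hv.trans interior_subset
  exact ((hconv v (hsX v.2)).segment_subset ⟨hsub (Metric.mem_ball_self hδ), hsX ha⟩
    ⟨hsub (by rwa [Metric.mem_ball, dist_comm]), hb⟩).trans inter_subset_right

def planeMap {E : Type*} [AddCommGroup E] [Module ℝ E] (c u v : E) : ℝ × ℝ →ᵃ[ℝ] E :=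
  ((LinearMap.toSpanSingleton ℝ E u).coprod (LinearMap.toSpanSingleton ℝ E v)).toAffineMap +
    AffineMap.const ℝ (ℝ × ℝ) c

section PlaneMap

variable {E : Type*} [AddCommGroup E] [Module ℝ E] (c u v : E)

@[simp]
theorem planeMap_apply (p : ℝ × ℝ) : planeMap c u v p = p.1 • u + p.2 • v + c := by
  simp [planeMap]

theorem continuous_planeMap [TopologicalSpace E] [ContinuousAdd E] [ContinuousSMul ℝ E] :
    Continuous (planeMap c u v) := by
  have : ⇑(planeMap c u v) = fun p => p.1 • u + p.2 • v + c := funext (planeMap_apply c u v)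
  rw [this]
  fun_prop

end PlaneMap

theorem mk_mul_mem_of_mk_mul_mem {Y : Set (ℝ × ℝ)} (hY : IsClosed Y) {δ s t : ℝ}
    (hδ : ∀ a ∈ unitSquare ∩ Y, ∀ b ∈ Y, dist a b < δ → segment ℝ a b ⊆ Y)
    (hside : ∀ ξ ∈ Icc (0 : ℝ) 1, (0, ξ) ∈ Y) (hs : 0 ≤ s) (hst : s ≤ t) (ht : t ≤ 1)
    (htδ : t - s < δ) (hbase : ∀ h ∈ Icc (0 : ℝ) 1, (h, (1 - h) * s) ∈ Y)
    {h : ℝ} (hh : h ∈ Icc (0 : ℝ) 1) : (h, (1 - h) * t) ∈ Y := by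
  -- `ψ` maps the triangle `(0, 0), (0, 1), (1, 0)` onto the triangle `(0, s), (0, t), (1, 0)`
  set ψ := planeMap ((0 : ℝ), s) (1, -s) (0, t - s)
  have hψ : ∀ p, ψ p = (p.1, (1 - p.1) * s + p.2 * (t - s)) := fun p => by
    ext
    · simp [ψ]
    · simp [ψ]; ring
  set w := (δ - (t - s)) / 2 with hw
  have hclose : ∀ p ∈ unitSquare ∩ ψ ⁻¹' Y, ∀ q ∈ unitSquare ∩ ψ ⁻¹' Y,
      |p.1 - q.1| ≤ w → segment ℝ p q ⊆ ψ ⁻¹' Y := by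
    rintro p ⟨⟨⟨hp₁, hp₁'⟩, hp₂, hp₂'⟩, hpY⟩ q ⟨⟨⟨hq₁, hq₁'⟩, hq₂, hq₂'⟩, hqY⟩ hpq
    rw [← image_subset_iff, image_segment]
    refine hδ _ ⟨?_, hpY⟩ _ hqY ?_
    · rw [hψ]
      exact ⟨⟨hp₁, hp₁'⟩, by nlinarith, by nlinarith⟩
    · obtain ⟨hpq₁, hpq₂⟩ := abs_le.mp hpq
      rw [hψ, hψ, Prod.dist_eq, Real.dist_eq, Real.dist_eq]
      dsimp only
      have hts : 0 ≤ t - s := sub_nonneg.mpr hst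
      refine max_lt (by linarith) (abs_lt.mpr ⟨?_, ?_⟩) <;>
        nlinarith [mul_le_mul_of_nonneg_left hpq₂ hs, mul_le_mul_of_nonneg_left hpq₁ hs,
          mul_le_mul_of_nonneg_right hp₂' hts, mul_le_mul_of_nonneg_right hq₂' hts,
          mul_nonneg hp₂ hts, mul_nonneg hq₂ hts]
  have := mk_one_sub_mem_of_segment_subset (hY.preimage (continuous_planeMap _ _ _))
    (half_pos (by linarith))
    (fun h hh => by rw [mem_preimage, hψ, zero_mul, add_zero]; exact hbase h hh)
    (fun ξ hξ => by
      rw [mem_preimage, hψ]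
      exact hside _ ⟨by nlinarith [hξ.1], by nlinarith [hξ.2]⟩) hclose hh
  rw [mem_preimage, hψ] at this
  convert this using 2
  ring

theorem IsLocallyConvexSet.mk_one_sub_mem {Y : Set (ℝ × ℝ)} (hY : IsClosed Y)
    (hlc : IsLocallyConvexSet Y) (hbase : ∀ h ∈ Icc (0 : ℝ) 1, (h, 0) ∈ Y)
    (hside : ∀ ξ ∈ Icc (0 : ℝ) 1, (0, ξ) ∈ Y) {h : ℝ} (hh : h ∈ Icc (0 : ℝ) 1) :
    (h, 1 - h) ∈ Y := by
  obtain ⟨δ, hδ, hseg⟩ :=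
    hlc.exists_segment_subset ((isCompact_Icc.prod isCompact_Icc).inter_right hY)
      inter_subset_right
  have hmarch : ∀ n : ℕ, ∀ h ∈ Icc (0 : ℝ) 1, (h, (1 - h) * min (n * (δ / 2)) 1) ∈ Y := by
    intro n
    induction n with
    | zero => simpa using hbase
    | succ n ih =>
      refine fun h hh => mk_mul_mem_of_mk_mul_mem hY hseg hside (by positivity)
        (min_le_min_right _ (by gcongr; linarith)) (min_le_right _ _) ?_ ih hh
      push_cast
      rw [min_def, min_def]
      split_ifs <;> nlinarith
  obtain ⟨n, hn⟩ := exists_nat_gt (2 / δ)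
  have hn1 : 1 ≤ n * (δ / 2) := by
    rw [div_lt_iff₀ hδ] at hn
    linarith
  simpa [min_eq_right hn1] using hmarch n h hh

theorem stmt_2_general {V : Type*} [TopologicalSpace V] [AddCommGroup V] [Module ℝ V]
    [IsTopologicalAddGroup V] [ContinuousSMul ℝ V]
    {X : Set V} (hclosed : IsClosed X)
    (hlc : ∀ v ∈ X, ∃ N ∈ nhds v, Convex ℝ (N ∩ X))
    {x y z : V} (hxy : segment ℝ x y ⊆ X) (hyz : segment ℝ y z ⊆ X) :
    segment ℝ x z ⊆ X := by
  set φ := planeMap y (z - y) (x - y)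
  have hφ : Continuous φ := continuous_planeMap _ _ _
  rintro _ ⟨a, t, ha, ht, hat, rfl⟩
  obtain rfl : a = 1 - t := by linarith
  have hmem := IsLocallyConvexSet.mk_one_sub_mem (hclosed.preimage hφ)
    (IsLocallyConvexSet.preimage hlc φ hφ)
    (fun h hh => hyz ⟨1 - h, h, by linarith [hh.2], hh.1, by ring, by simp [φ]; module⟩)
    (fun ξ hξ => hxy ⟨ξ, 1 - ξ, hξ.1, by linarith [hξ.2], by ring, by simp [φ]; module⟩)
    ⟨ht, by linarith⟩
  rw [mem_preimage, planeMap_apply] at hmem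
  convert hmem using 1
  module

/-- Cutting corners: if `X` is a closed, connected, locally convex subset of a
topological vector space and `[x,y] ⊆ X`, `[y,z] ⊆ X`, then `[x,z] ⊆ X`. -/
theorem stmt_2 {V : Type*} [TopologicalSpace V] [AddCommGroup V] [Module ℝ V]
    [IsTopologicalAddGroup V] [ContinuousSMul ℝ V]
    {X : Set V} (hclosed : IsClosed X) (hconn : IsPreconnected X)
    (hlc : ∀ v ∈ X, ∃ N ∈ nhds v, Convex ℝ (N ∩ X))
    {x y z : V} (hxy : segment ℝ x y ⊆ X) (hyz : segment ℝ y z ⊆ X) :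
    segment ℝ x z ⊆ X :=
  stmt_2_general hclosed hlc hxy hyz
end
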